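/- arXiv:1208.3507 — 5 statements merged into one kernel-verified Lean document; each statement's English description precedes it below -/
import Mathlib

section
/- For every p in (1,∞), the integral ∫_{-1}^{1} (1-s^p)^{-1/p} ds equals 2π/(p·sin(π/p)). -/
open MeasureTheory Set Real intervalIntegral

/-!
The integrand is even, so the integral is twice the one over `[0, 1]`. The substitution
`s = x ^ (1 / p)` turns that into `(1 / p) B(1 / p, 1 - 1 / p) = (1 / p) Γ(1 / p) Γ(1 - 1 / p)`,
and Euler's reflection formula evaluates this as `π / (p sin (π / p))`.
-/

theorem intervalIntegral.integral_neg_self_eq_two_smul_of_even {E : Type*} [NormedAddCommGroup E]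
    [NormedSpace ℝ E] {g : ℝ → E} (hg : ∀ x, g (-x) = g x) (a : ℝ) :
    ∫ x in -a..a, g x = 2 • ∫ x in 0..a, g x := by
  by_cases hint : IntervalIntegrable g volume 0 a
  · have hint' : IntervalIntegrable g volume (-a) 0 := by
      simpa [hg] using ((IntervalIntegrable.iff_comp_neg).mp hint).symm
    have hreflect : ∫ x in -a..0, g x = ∫ x in 0..a, g x := by
      simpa [hg] using (integral_comp_neg (a := 0) (b := a) g).symm
    rw [← integral_add_adjacent_intervals hint' hint, hreflect, two_smul]
  · have hzero : (0 : ℝ) ∈ uIcc (-a) a := by rcases le_total 0 a with h | h <;> simp [h]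
    have hint' : ¬IntervalIntegrable g volume (-a) a := fun h =>
      hint (h.mono_set (uIcc_subset_uIcc hzero right_mem_uIcc))
    rw [integral_undef hint, integral_undef hint', smul_zero]

theorem intervalIntegral.integral_comp_rpow_zero_one {E : Type*} [NormedAddCommGroup E]
    [NormedSpace ℝ E] (f : ℝ → E) {q : ℝ} (hq : 0 < q) :
    ∫ x in 0..1, (q * x ^ (q - 1)) • f (x ^ q) = ∫ y in 0..1, f y := by
  have hsub := integral_comp_rpow_Ioi_of_pos (g := (Iic 1).indicator f) hq
  rw [setIntegral_indicator measurableSet_Iic, Ioi_inter_Iic] at hsub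
  rw [integral_of_le zero_le_one, integral_of_le zero_le_one, ← hsub, ← Ioi_inter_Iic,
    ← setIntegral_indicator measurableSet_Iic]
  refine setIntegral_congr_fun measurableSet_Ioi fun x hx => ?_
  have hmem : x ^ q ∈ Iic 1 ↔ x ∈ Iic 1 := by
    simp [rpow_le_one_iff_of_pos hx, hq.le, hq.not_ge]
  by_cases hx1 : x ∈ Iic 1 <;> simp [indicator, hx1, hmem]

theorem integral_rpow_mul_one_sub_rpow {a b : ℝ} (ha : 0 < a) (hb : 0 < b) :
    ∫ x in (0:ℝ)..1, x ^ (a - 1) * (1 - x) ^ (b - 1) = Gamma a * Gamma b / Gamma (a + b) := by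
  have hcast : ((∫ x in (0:ℝ)..1, x ^ (a - 1) * (1 - x) ^ (b - 1) : ℝ) : ℂ)
      = Complex.betaIntegral a b := by
    rw [Complex.betaIntegral, ← intervalIntegral.integral_ofReal]
    refine integral_congr fun x hx => ?_
    rw [uIcc_of_le zero_le_one] at hx
    push_cast [Complex.ofReal_cpow hx.1, Complex.ofReal_cpow (sub_nonneg.2 hx.2)]
    rfl
  rw [Complex.betaIntegral_eq_Gamma_mul_div _ _ (by simpa) (by simpa), ← Complex.ofReal_add]
    at hcast
  simp only [Complex.Gamma_ofReal] at hcast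
  exact_mod_cast hcast

/-- For every p ∈ (1,∞), ∫_{-1}^{1} (1-|s|^p)^{-1/p} ds = 2π/(p·sin(π/p)).
This value is the generalized half-period π_p. -/
theorem stmt0 (p : ℝ) (hp : 1 < p) :
    (∫ s in (-1:ℝ)..1, (1 - |s| ^ p) ^ (-1/p)) =
      2 * Real.pi / (p * Real.sin (Real.pi / p)) := by
  have hp0 : 0 < p := by linarith
  have hq : 0 < 1 / p := by positivity
  have hq1 : 1 / p < 1 := (div_lt_one hp0).2 hp
  have half : ∫ s in (0:ℝ)..1, (1 - |s| ^ p) ^ (-1/p) = π / (p * sin (π / p)) :=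
    calc ∫ s in (0:ℝ)..1, (1 - |s| ^ p) ^ (-1/p)
        = ∫ s in (0:ℝ)..1, (1 - s ^ p) ^ (-1/p) := integral_congr fun s hs => by
          rw [uIcc_of_le zero_le_one] at hs
          rw [abs_of_nonneg hs.1]
      _ = ∫ x in (0:ℝ)..1, (1 / p * x ^ (1 / p - 1)) • (1 - (x ^ (1 / p)) ^ p) ^ (-1/p) :=
          (integral_comp_rpow_zero_one _ hq).symm
      _ = 1 / p * ∫ x in (0:ℝ)..1, x ^ (1 / p - 1) * (1 - x) ^ ((1 - 1 / p) - 1) := by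
          rw [← intervalIntegral.integral_const_mul]
          refine integral_congr fun x hx => ?_
          rw [uIcc_of_le zero_le_one] at hx
          rw [smul_eq_mul, ← rpow_mul hx.1, one_div_mul_cancel hp0.ne', rpow_one]
          ring_nf
      _ = 1 / p * (Gamma (1 / p) * Gamma (1 - 1 / p) / Gamma (1 / p + (1 - 1 / p))) := by
          rw [integral_rpow_mul_one_sub_rpow hq (by linarith)]
      _ = π / (p * sin (π / p)) := by
          rw [add_sub_cancel, Gamma_one, div_one, Gamma_mul_Gamma_one_sub]
          field_simp
  rw [integral_neg_self_eq_two_smul_of_even (fun s => by rw [abs_neg]) 1, half, two_smul]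
  ring
end

section
/- Let w be a C¹ solution of d/dt(w'^{(p-1)}) - T·w'^{(p-1)} + λ·w^{(p-1)} = 0 on an interval, with (w, w') never both zero. Define α = (λ/(p-1))^{1/p}, e = (|w'|^p + α^p|w|^p)^{1/p} > 0, and let φ satisfy α·w = e·sin_p(φ) and w' = e·cos_p(φ). Then φ satisfies the first-order ODE φ' = α - (T/(p-1))·cos_p^{(p-1)}(φ)·sin_p(φ), and e satisfies (log e)' = (T/(p-1))·cos_p^p(φ). -/
/-!
Differentiating `e^p = |w'|^p + λ/(p-1)·|w|^p` along the equation, the `λ`-terms cancel and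
`(e^p)' = p/(p-1)·T·|w'|^p`, which is the radial equation. Differentiating `α·w = e·sin_p φ`
and substituting `w' = e·cos_p φ` gives the angular equation wherever `cos_p φ ≠ 0`.
A zero of `cos_p φ` is a zero of `w'`, where the equation forces
`(w'^{(p-1)})' = -λ·w^{(p-1)} ≠ 0`, so such zeros are isolated. Written as
`α - T/(p-1)·w'^{(p-1)}·α·w/e^p`, the right-hand side of the angular equation is continuous
there, and a derivative that agrees with a continuous function off a point also agrees with it
at that point.
-/

open Real Set Filter MeasureTheory
open Topology

/-- The signed power `x^{(q)} := |x|^{q-?}`; here `spow x q = |x|^q · sign x`,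
so that `x^{(p-1)} = |x|^{p-2}·x = spow x (p-1)`. -/
noncomputable def spow (x q : ℝ) : ℝ := Real.sign x * |x| ^ q

/-- The generalized half-period `π_p = ∫_{-1}^1 (1-|s|^p)^{-1/p} ds`. -/
noncomputable def pip (p : ℝ) : ℝ := ∫ s in (-1:ℝ)..1, (1 - |s| ^ p) ^ (-1/p)

/-- `sinp` and `cosp` are the generalized p-trigonometric functions:
on `[-π_p/2, π_p/2]` the function `sinp` is defined implicitly by
`t = ∫_0^{sinp t} (1-|s|^p)^{-1/p} ds`, it satisfies the reflection rule
`sinp t = sinp (π_p - t)` on `[π_p/2, 3π_p/2]`, is `2π_p`-periodic, and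
`cosp` is its derivative. -/
def IsPTrig (p : ℝ) (sinp cosp : ℝ → ℝ) : Prop :=
  (∀ t ∈ Set.Icc (-(pip p)/2) (pip p/2),
      t = ∫ s in (0:ℝ)..(sinp t), (1 - |s| ^ p) ^ (-1/p)) ∧
  (∀ t ∈ Set.Icc (pip p/2) (3 * pip p/2), sinp t = sinp (pip p - t)) ∧
  (∀ t, sinp (t + 2 * pip p) = sinp t) ∧
  (∀ t, HasDerivAt sinp (cosp t) t)

lemma Real.sign_mul_abs (x : ℝ) : Real.sign x * |x| = x := by
  rcases lt_trichotomy x 0 with h | rfl | h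
  · simp [Real.sign_of_neg h, abs_of_neg h]
  · simp
  · simp [Real.sign_of_pos h, abs_of_pos h]

lemma Real.mul_sign_self (x : ℝ) : x * Real.sign x = |x| := by
  rcases lt_trichotomy x 0 with h | rfl | h
  · simp [Real.sign_of_neg h, abs_of_neg h]
  · simp
  · simp [Real.sign_of_pos h, abs_of_pos h]

lemma Real.abs_sign_of_ne_zero {x : ℝ} (hx : x ≠ 0) : |Real.sign x| = 1 := by
  rcases Real.sign_apply_eq_of_ne_zero x hx with h | h <;> simp [h]

lemma Real.sign_mul_of_pos {a : ℝ} (ha : 0 < a) (b : ℝ) : Real.sign (a * b) = Real.sign b := by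
  rcases lt_trichotomy b 0 with h | rfl | h
  · rw [Real.sign_of_neg (mul_neg_of_pos_of_neg ha h), Real.sign_of_neg h]
  · simp
  · rw [Real.sign_of_pos (mul_pos ha h), Real.sign_of_pos h]

section SignedPower

variable {x q : ℝ}

lemma zero_spow (q : ℝ) : spow 0 q = 0 := by simp [spow]

lemma spow_one (x : ℝ) : spow x 1 = x := by simp [spow, Real.sign_mul_abs]

lemma spow_ne_zero (q : ℝ) (hx : x ≠ 0) : spow x q ≠ 0 :=
  mul_ne_zero (Real.sign_eq_zero_iff.not.2 hx) (rpow_pos_of_pos (abs_pos.2 hx) q).ne'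

lemma sign_spow (x q : ℝ) : Real.sign (spow x q) = Real.sign x := by
  rcases eq_or_ne x 0 with rfl | hx
  · simp [zero_spow]
  · rw [spow, mul_comm, Real.sign_mul_of_pos (rpow_pos_of_pos (abs_pos.2 hx) q)]
    rcases Real.sign_apply_eq_of_ne_zero x hx with h | h <;> simp [h, Real.sign_neg]

lemma abs_spow (hq : q ≠ 0) (x : ℝ) : |spow x q| = |x| ^ q := by
  rcases eq_or_ne x 0 with rfl | hx
  · simp [zero_spow, zero_rpow hq]
  · rw [spow, abs_mul, Real.abs_sign_of_ne_zero hx, one_mul,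
      abs_of_nonneg (rpow_nonneg (abs_nonneg x) q)]

lemma spow_spow (hq : q ≠ 0) (x r : ℝ) : spow (spow x q) r = spow x (q * r) := by
  show Real.sign (spow x q) * |spow x q| ^ r = spow x (q * r)
  rw [sign_spow, abs_spow hq, ← rpow_mul (abs_nonneg x)]
  rfl

lemma spow_mul_of_pos {a : ℝ} (ha : 0 < a) (b q : ℝ) : spow (a * b) q = a ^ q * spow b q := by
  rw [spow, spow, Real.sign_mul_of_pos ha, abs_mul, abs_of_pos ha, mul_rpow ha.le (abs_nonneg b)]
  ring

lemma abs_rpow_eq_mul_spow {p : ℝ} (hp : p ≠ 0) (x : ℝ) : |x| ^ p = x * spow x (p - 1) := by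
  rw [spow, ← mul_assoc, Real.mul_sign_self, ← rpow_one_add' (abs_nonneg x) (by simpa)]
  ring_nf

lemma hasDerivAt_abs_rpow_spow (hq : 1 < q) (x : ℝ) :
    HasDerivAt (fun y => |y| ^ q) (q * spow x (q - 1)) x := by
  have h : spow x (q - 1) = |x| ^ (q - 2) * x := by
    rw [spow, show q - 1 = q - 2 + 1 by ring, rpow_add' (abs_nonneg x) (by linarith), rpow_one,
      mul_left_comm, Real.sign_mul_abs]
  rw [h, ← mul_assoc]
  exact hasDerivAt_abs_rpow x hq

/-- No differentiability of `f` itself is needed, since `|f|^p = |f^{(p-1)}|^{p/(p-1)}`. -/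
lemma hasDerivAt_abs_rpow_of_hasDerivAt_spow {p : ℝ} (hp : 1 < p) {f : ℝ → ℝ} {v x : ℝ}
    (h : HasDerivAt (fun s => spow (f s) (p - 1)) v x) :
    HasDerivAt (fun s => |f s| ^ p) (p / (p - 1) * f x * v) x := by
  have hp1 : p - 1 ≠ 0 := by linarith
  have hq : 1 < p / (p - 1) := (one_lt_div (by linarith)).2 (by linarith)
  have hfun : (fun s => |f s| ^ p) = fun s => |spow (f s) (p - 1)| ^ (p / (p - 1)) := by
    funext s
    rw [abs_spow hp1, ← rpow_mul (abs_nonneg _), mul_div_cancel₀ _ hp1]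
  have hexp : (p - 1) * (p / (p - 1) - 1) = 1 := by field_simp; ring
  rw [hfun]
  refine ((hasDerivAt_abs_rpow_spow hq _).comp x h).congr_deriv ?_
  rw [spow_spow hp1, hexp, spow_one]

end SignedPower

theorem eq_of_hasDerivAt_of_eventuallyEq_nhdsNE {E : Type*} [NormedAddCommGroup E]
    [NormedSpace ℝ E] {f f' g : ℝ → E} {x : ℝ} (hf : ∀ᶠ y in 𝓝 x, HasDerivAt f (f' y) y)
    (hfg : f' =ᶠ[𝓝[≠] x] g) (hg : ContinuousAt g x) : f' x = g x := by
  have hx : HasDerivAt f (f' x) x := hf.self_of_nhds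
  have hlim : Tendsto (deriv f) (𝓝[>] x) (𝓝 (g x)) := by
    refine (hg.tendsto.mono_left nhdsWithin_le_nhds).congr' ?_
    filter_upwards [nhdsWithin_mono x (fun y hy => ne_of_gt hy) hfg,
      nhdsWithin_le_nhds hf] with y hfg hf
    rw [hf.deriv, hfg]
  have hright : HasDerivWithinAt f (g x) (Ici x) x :=
    hasDerivWithinAt_Ici_of_tendsto_deriv (fun y hy => hy.differentiableAt.differentiableWithinAt)
      hx.continuousAt.continuousWithinAt (nhdsWithin_le_nhds hf) hlim
  exact (uniqueDiffWithinAt_Ici x).eq_deriv _ hx.hasDerivWithinAt hright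

namespace Prufer

variable {p lam : ℝ} {T w w' : ℝ → ℝ} {t v : ℝ}

theorem hasDerivAt_energy (hp : 1 < p) (hw : HasDerivAt w (w' t) t)
    (hv : HasDerivAt (fun s => spow (w' s) (p - 1)) v t)
    (hode : v - T t * spow (w' t) (p - 1) + lam * spow (w t) (p - 1) = 0) :
    HasDerivAt (fun s => |w' s| ^ p + lam / (p - 1) * |w s| ^ p)
      (p / (p - 1) * T t * |w' t| ^ p) t := by
  refine ((hasDerivAt_abs_rpow_of_hasDerivAt_spow hp hv).add
    (((hasDerivAt_abs_rpow_spow hp (w t)).comp t hw).const_mul (lam / (p - 1)))).congr_deriv ?_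
  rw [abs_rpow_eq_mul_spow (by linarith) (w' t)]
  linear_combination (p / (p - 1) * w' t) * hode

theorem radius_deriv_eq (hp : 1 < p) {e : ℝ → ℝ} {e' c : ℝ} (hw : HasDerivAt w (w' t) t)
    (hv : HasDerivAt (fun s => spow (w' s) (p - 1)) v t)
    (hode : v - T t * spow (w' t) (p - 1) + lam * spow (w t) (p - 1) = 0)
    (he : ∀ᶠ s in 𝓝 t, e s ^ p = |w' s| ^ p + lam / (p - 1) * |w s| ^ p)
    (he_pos : 0 < e t) (hed : HasDerivAt e e' t) (hpolar : w' t = e t * c) :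
    e' = T t / (p - 1) * e t * |c| ^ p := by
  have h := (hed.rpow_const (p := p) (Or.inl he_pos.ne')).unique
    ((hasDerivAt_energy hp hw hv hode).congr_of_eventuallyEq he)
  have hpow : e t ^ p = e t ^ (p - 1) * e t := by rw [← rpow_add_one he_pos.ne', sub_add_cancel]
  rw [hpolar, abs_mul, mul_rpow (abs_nonneg _) (abs_nonneg _), abs_of_pos he_pos, hpow] at h
  apply mul_left_cancel₀ (mul_ne_zero (by linarith : p ≠ 0) (rpow_pos_of_pos he_pos (p - 1)).ne')
  linear_combination h

theorem angle_deriv_eq {sinp cosp e φ : ℝ → ℝ} {α e' φ' k : ℝ} (hp : p ≠ 0)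
    (hsin : HasDerivAt sinp (cosp (φ t)) (φ t)) (hw : HasDerivAt w (w' t) t)
    (hφ : HasDerivAt φ φ' t) (hed : HasDerivAt e e' t)
    (hsin_polar : ∀ᶠ s in 𝓝 t, α * w s = e s * sinp (φ s))
    (hcos_polar : w' t = e t * cosp (φ t)) (he' : e' = k * e t * |cosp (φ t)| ^ p)
    (he : e t ≠ 0) (hc : cosp (φ t) ≠ 0) :
    φ' = α - k * spow (cosp (φ t)) (p - 1) * sinp (φ t) := by
  have h := (hw.const_mul α).unique ((hed.mul (hsin.comp t hφ)).congr_of_eventuallyEq hsin_polar)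
  rw [hcos_polar, he', abs_rpow_eq_mul_spow hp, Function.comp_apply] at h
  apply mul_left_cancel₀ (mul_ne_zero he hc)
  linear_combination -h

theorem continuousAt_spow_mul_of_polar {e c s : ℝ → ℝ} {α q : ℝ}
    (hu : ContinuousAt (fun τ => spow (w' τ) q) t) (hw : ContinuousAt w t)
    (he : ContinuousAt e t) (he_pos : 0 < e t)
    (hpolar : ∀ᶠ τ in 𝓝 t, α * w τ = e τ * s τ ∧ w' τ = e τ * c τ) :
    ContinuousAt (fun τ => spow (c τ) q * s τ) t := by
  have hcont : ContinuousAt (fun τ => spow (w' τ) q * (α * w τ) / e τ ^ (q + 1)) t :=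
    (hu.mul (continuousAt_const.mul hw)).div (he.rpow_const (Or.inl he_pos.ne'))
      (rpow_pos_of_pos he_pos _).ne'
  refine hcont.congr ?_
  filter_upwards [hpolar, he.eventually (lt_mem_nhds he_pos)] with τ ⟨hs, hc⟩ hτ
  rw [hs, hc, spow_mul_of_pos hτ, rpow_add_one hτ.ne']
  field_simp

theorem eventually_ne_zero_nhdsNE (hl : lam ≠ 0)
    (hv : HasDerivAt (fun s => spow (w' s) (p - 1)) v t)
    (hode : v - T t * spow (w' t) (p - 1) + lam * spow (w t) (p - 1) = 0)
    (hw'0 : w' t = 0) (hw0 : w t ≠ 0) : ∀ᶠ s in 𝓝[≠] t, w' s ≠ 0 := by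
  rw [hw'0, zero_spow, mul_zero, sub_zero] at hode
  have hv0 : v ≠ 0 := by
    rw [eq_neg_of_add_eq_zero_left hode]
    exact neg_ne_zero.2 (mul_ne_zero hl (spow_ne_zero _ hw0))
  filter_upwards [hv.eventually_ne (c := 0) hv0] with s hs h
  exact hs (by rw [h, zero_spow])

end Prufer

/-- the Prüfer transformation. If `w` solves
`(w'^{(p-1)})' - T·w'^{(p-1)} + λ·w^{(p-1)} = 0` on an interval with `(w,w')`
never both zero, and `e = (|w'|^p + α^p|w|^p)^{1/p}`, `α·w = e·sin_p φ`,
`w' = e·cos_p φ` with `α = (λ/(p-1))^{1/p}`, then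
`φ' = α - (T/(p-1))·cos_p^{(p-1)}(φ)·sin_p(φ)` and `(log e)' = e'/e = (T/(p-1))·|cos_p φ|^p`. -/
theorem stmt4 (p lam : ℝ) (hp : 1 < p) (hl : 0 < lam)
    (sinp cosp : ℝ → ℝ) (htrig : IsPTrig p sinp cosp)
    (I : Set ℝ) (hIopen : IsOpen I)
    (T : ℝ → ℝ) (hT : ContDiffOn ℝ 1 T I)
    (w w' v : ℝ → ℝ)
    (hw : ∀ t ∈ I, HasDerivAt w (w' t) t)
    (hv : ∀ t ∈ I, HasDerivAt (fun s => spow (w' s) (p-1)) (v t) t)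
    (hode : ∀ t ∈ I, v t - T t * spow (w' t) (p-1) + lam * spow (w t) (p-1) = 0)
    (hnz : ∀ t ∈ I, w t ≠ 0 ∨ w' t ≠ 0)
    (α : ℝ) (hα : α = (lam / (p-1)) ^ (1/p))
    (e φ e' φ' : ℝ → ℝ)
    (he : ∀ t ∈ I, e t = (|w' t| ^ p + α ^ p * |w t| ^ p) ^ (1/p))
    (hpolar : ∀ t ∈ I, α * w t = e t * sinp (φ t) ∧ w' t = e t * cosp (φ t))
    (hφd : ∀ t ∈ I, HasDerivAt φ (φ' t) t)
    (hed : ∀ t ∈ I, HasDerivAt e (e' t) t) :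
    ∀ t ∈ I,
      φ' t = α - T t / (p-1) * spow (cosp (φ t)) (p-1) * sinp (φ t) ∧
      e' t / e t = T t / (p-1) * |cosp (φ t)| ^ p := by
  intro t₀ ht₀
  have hp1 : 0 < p - 1 := by linarith
  have hα_pos : 0 < α := hα ▸ rpow_pos_of_pos (div_pos hl hp1) _
  have hαp : α ^ p = lam / (p - 1) := by
    rw [hα, one_div, rpow_inv_rpow (div_pos hl hp1).le (by linarith)]
  have hI : ∀ t ∈ I, ∀ᶠ s in 𝓝 t, s ∈ I := fun t ht => hIopen.mem_nhds ht
  have he_pow : ∀ t ∈ I, e t ^ p = |w' t| ^ p + lam / (p - 1) * |w t| ^ p := fun t ht => by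
    rw [he t ht, ← hαp, one_div, rpow_inv_rpow (by positivity) (by linarith)]
  have he_pos : ∀ t ∈ I, 0 < e t := fun t ht => by
    rw [he t ht]
    refine rpow_pos_of_pos ?_ _
    rcases hnz t ht with h | h <;> positivity
  have he' : ∀ t ∈ I, e' t = T t / (p - 1) * e t * |cosp (φ t)| ^ p := fun t ht =>
    Prufer.radius_deriv_eq hp (hw t ht) (hv t ht) (hode t ht) ((hI t ht).mono he_pow)
      (he_pos t ht) (hed t ht) (hpolar t ht).2
  have hφ' : ∀ t ∈ I, w' t ≠ 0 →
      φ' t = α - T t / (p - 1) * spow (cosp (φ t)) (p - 1) * sinp (φ t) := fun t ht hw't =>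
    Prufer.angle_deriv_eq (by linarith) (htrig.2.2.2 _) (hw t ht) (hφd t ht) (hed t ht)
      ((hI t ht).mono fun s hs => (hpolar s hs).1) (hpolar t ht).2 (he' t ht)
      (he_pos t ht).ne' fun hc => hw't (by rw [(hpolar t ht).2, hc, mul_zero])
  refine ⟨?_, by rw [he' t₀ ht₀]; field_simp [(he_pos t₀ ht₀).ne']⟩
  rcases ne_or_eq (w' t₀) 0 with hw'0 | hw'0
  · exact hφ' t₀ ht₀ hw'0
  refine eq_of_hasDerivAt_of_eventuallyEq_nhdsNE (g := fun t =>
    α - T t / (p - 1) * spow (cosp (φ t)) (p - 1) * sinp (φ t)) ((hI t₀ ht₀).mono hφd) ?_ ?_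
  · filter_upwards [nhdsWithin_le_nhds (hI t₀ ht₀), Prufer.eventually_ne_zero_nhdsNE hl.ne'
      (hv t₀ ht₀) (hode t₀ ht₀) hw'0 ((hnz t₀ ht₀).resolve_right (not_not.2 hw'0))] with t ht
    exact hφ' t ht
  · have hT_cont := hT.continuousOn.continuousAt (hIopen.mem_nhds ht₀)
    have hcos_sin := Prufer.continuousAt_spow_mul_of_polar (hv t₀ ht₀).continuousAt
      (hw t₀ ht₀).continuousAt (hed t₀ ht₀).continuousAt (he_pos t₀ ht₀) ((hI t₀ ht₀).mono hpolar)
    simp only [mul_assoc]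
    fun_prop
end

section
/- Let ℓ = max over ψ ∈ (-π_p/2, 0) of -cos_p^{(p-1)}(ψ)·sin_p(ψ), and set ᾱ = (n-1)ℓ√(-k)/(p-1). If α > ᾱ, then the equation α + ((n-1)√(-k)/(p-1))·cos_p^{(p-1)}(ψ)·sin_p(ψ) = 0 has no solution ψ ∈ [-π_p/2, π_p/2]; if 0 < α < ᾱ, it has exactly two solutions ψ₁ < ψ₂ in (-π_p/2, 0); if α = ᾱ, exactly one. -/
open Real Set Filter MeasureTheory

/-!
The definition of `IsPTrig` only says that `arcsinp p ∘ sinp = id` on `[-π_p/2, π_p/2]`, where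
`arcsinp p x = ∫₀ˣ (1 - |s|^p)^{-1/p} ds`; as `Real.rpow` returns junk values at negative bases,
`|sinp| ≤ 1` is not built in. It is recovered at the endpoints: reflection and periodicity make
`sinp` symmetric about `±π_p/2`, so `cosp (±π_p/2) = 0`, and differentiating
`arcsinp p ∘ sinp = id` there forces `|sinp (±π_p/2)| = 1`; the intermediate value theorem then
keeps `|sinp| < 1` inside. On `(-π_p/2, π_p/2)` this gives `cosp = (1 - |sinp|^p)^{1/p}`, hence
`-cos_p^{(p-1)} ψ · sinp ψ = profile p (-sinp ψ)` with `profile p σ = σ (1 - |σ|^p)^{(p-1)/p}`,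
and the equation becomes `profile p σ = α (p-1) / ((n-1) √(-k))` for `σ = -sinp ψ ∈ (0, 1)`.
On `[0, 1]` the profile vanishes at both ends, increases strictly up to `σ* = p^{-1/p}` and then
decreases strictly, so `ℓ = profile p σ*`, and its level sets have zero, two or one points.
-/

lemma intervalIntegrable_abs_rpow {r : ℝ} (hr : -1 < r) (a b : ℝ) :
    IntervalIntegrable (fun x : ℝ => |x| ^ r) volume a b := by
  refine intervalIntegrable_of_even (by simp) fun c hc => ?_
  refine (intervalIntegral.intervalIntegrable_rpow' hr).congr fun x hx => ?_
  rw [uIoc_of_le hc.le] at hx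
  simp [abs_of_pos hx.1]

lemma abs_one_sub_le_abs_one_sub_rpow {p x : ℝ} (hp : 1 ≤ p) (hx : 0 ≤ x) :
    |1 - x| ≤ |1 - x ^ p| := by
  rcases le_total x 1 with h | h
  · have : x ^ p ≤ x := by simpa using Real.rpow_le_rpow_of_exponent_ge' hx h zero_le_one hp
    rw [abs_of_nonneg (by linarith), abs_of_nonneg (by linarith [Real.rpow_nonneg hx p])]
    linarith
  · have : x ≤ x ^ p := by simpa using Real.rpow_le_rpow_of_exponent_le h hp
    rw [abs_of_nonpos (by linarith), abs_of_nonpos (by linarith)]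
    linarith

lemma mul_eq_one_of_leftInvOn_Icc {F f : ℝ → ℝ} {a b t e d : ℝ} (hab : a < b) (ht : t ∈ Icc a b)
    (hF : HasDerivAt F e (f t)) (hf : HasDerivAt f d t) (hinv : LeftInvOn F f (Icc a b)) :
    e * d = 1 := by
  have h : HasDerivWithinAt id (e * d) (Icc a b) t :=
    (hF.comp_hasDerivWithinAt t hf.hasDerivWithinAt).congr (fun u hu => (hinv hu).symm)
      (hinv ht).symm
  exact (uniqueDiffOn_Icc hab t ht).eq_deriv _ h (hasDerivWithinAt_id t _)

lemma HasDerivAt.eq_zero_of_forall_add_eq_sub {f : ℝ → ℝ} {c d δ : ℝ} (hf : HasDerivAt f d c)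
    (hδ : 0 < δ) (hsymm : ∀ x ∈ Icc 0 δ, f (c + x) = f (c - x)) : d = 0 := by
  have hc : HasDerivAt f d (c + 0) := by rwa [add_zero]
  have hc' : HasDerivAt f d (c - 0) := by rwa [sub_zero]
  have h₁ := (hc.comp_const_add c 0).hasDerivWithinAt (s := Icc 0 δ)
  have h₂ := ((hc'.comp_const_sub c 0).hasDerivWithinAt (s := Icc 0 δ)).congr hsymm
    (hsymm 0 (left_mem_Icc.2 hδ.le))
  have := (uniqueDiffOn_Icc hδ 0 (left_mem_Icc.2 hδ.le)).eq_deriv _ h₁ h₂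
  linarith

lemma exists_setOf_eq_pair_of_strictMonoOn_of_strictAntiOn {f : ℝ → ℝ} {a m b β : ℝ}
    (ham : a ≤ m) (hmb : m ≤ b) (hf : ContinuousOn f (Icc a b))
    (hinc : StrictMonoOn f (Icc a m)) (hdec : StrictAntiOn f (Icc m b))
    (ha : f a < β) (hb : f b < β) (hm : β < f m) :
    ∃ x y, x < y ∧ {z | z ∈ Ioo a b ∧ f z = β} = {x, y} := by
  obtain ⟨x, hx, hfx⟩ := intermediate_value_Ioo ham (hf.mono (Icc_subset_Icc_right hmb)) ⟨ha, hm⟩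
  obtain ⟨y, hy, hfy⟩ :=
    intermediate_value_Ioo' hmb (hf.mono (Icc_subset_Icc_left ham)) ⟨hb, hm⟩
  refine ⟨x, y, hx.2.trans hy.1, Set.ext fun z => ⟨fun ⟨hz, hfz⟩ => ?_, ?_⟩⟩
  · rcases le_total z m with h | h
    · exact Or.inl (hinc.injOn ⟨hz.1.le, h⟩ (Ioo_subset_Icc_self hx) (hfz.trans hfx.symm))
    · exact Or.inr (hdec.injOn ⟨h, hz.2.le⟩ (Ioo_subset_Icc_self hy) (hfz.trans hfy.symm))
  · rintro (rfl | rfl)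
    · exact ⟨⟨hx.1, hx.2.trans_le hmb⟩, hfx⟩
    · exact ⟨⟨ham.trans_lt hy.1, hy.2⟩, hfy⟩

section arcsinp

variable {p : ℝ}

noncomputable def arcsinpIntegrand (p s : ℝ) : ℝ := (1 - |s| ^ p) ^ (-1/p)

noncomputable def arcsinp (p x : ℝ) : ℝ := ∫ s in (0:ℝ)..x, arcsinpIntegrand p s

lemma arcsinpIntegrand_neg (s : ℝ) : arcsinpIntegrand p (-s) = arcsinpIntegrand p s := by
  simp [arcsinpIntegrand]

lemma measurable_arcsinpIntegrand : Measurable (arcsinpIntegrand p) := by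
  unfold arcsinpIntegrand; fun_prop

lemma intervalIntegrable_arcsinpIntegrand (hp : 1 < p) (a b : ℝ) :
    IntervalIntegrable (arcsinpIntegrand p) volume a b := by
  have hr : -1 / p < 0 := div_neg_of_neg_of_pos (by norm_num) (by linarith)
  refine intervalIntegrable_of_even (fun s => (arcsinpIntegrand_neg s).symm) fun c hc => ?_
  have hbound : IntervalIntegrable (fun s : ℝ => |1 - s| ^ (-1/p)) volume 0 c := by
    have hr' : -1 < -1 / p := by
      rw [neg_div, neg_lt_neg_iff, div_lt_one (by linarith)]; exact hp
    simpa using (intervalIntegrable_abs_rpow hr' 1 (1 - c)).comp_sub_left 1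
  refine hbound.mono_fun (measurable_arcsinpIntegrand.aestronglyMeasurable) ?_
  rw [EventuallyLE, ae_restrict_iff' measurableSet_uIoc]
  refine Eventually.of_forall fun s hs => ?_
  rw [uIoc_of_le hc.le] at hs
  rw [Real.norm_eq_abs, Real.norm_eq_abs, abs_of_nonneg (Real.rpow_nonneg (abs_nonneg _) _)]
  refine (Real.abs_rpow_le_abs_rpow _ _).trans ?_
  rw [abs_of_pos hs.1]
  rcases eq_or_ne s 1 with rfl | hs1
  · simp [Real.zero_rpow hr.ne]
  · exact Real.rpow_le_rpow_of_nonpos (abs_pos.2 (sub_ne_zero.2 hs1.symm))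
      (abs_one_sub_le_abs_one_sub_rpow hp.le hs.1.le) hr.le

lemma arcsinpIntegrand_pos (hp : 0 < p) {s : ℝ} (hs : |s| < 1) : 0 < arcsinpIntegrand p s :=
  Real.rpow_pos_of_pos (sub_pos.2 (Real.rpow_lt_one (abs_nonneg s) hs hp)) _

lemma hasDerivAt_arcsinp (hp : 1 < p) {x : ℝ} (hx : 1 - |x| ^ p ≠ 0) :
    HasDerivAt (arcsinp p) (arcsinpIntegrand p x) x := by
  have hcont : ContinuousAt (arcsinpIntegrand p) x := by
    unfold arcsinpIntegrand
    exact (continuousAt_const.sub (continuous_abs.continuousAt.rpow_const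
      (Or.inr (by linarith)))).rpow_const (Or.inl hx)
  exact intervalIntegral.integral_hasDerivAt_right (intervalIntegrable_arcsinpIntegrand hp 0 x)
    measurable_arcsinpIntegrand.aestronglyMeasurable.stronglyMeasurableAtFilter hcont

lemma arcsinp_neg (x : ℝ) : arcsinp p (-x) = -arcsinp p x := by
  have h := intervalIntegral.integral_comp_neg (a := 0) (b := x) (arcsinpIntegrand p)
  simp only [arcsinpIntegrand_neg, neg_zero] at h
  rw [arcsinp, intervalIntegral.integral_symm, ← h, arcsinp]

lemma arcsinp_sub_arcsinp (hp : 1 < p) (x y : ℝ) :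
    arcsinp p y - arcsinp p x = ∫ s in x..y, arcsinpIntegrand p s :=
  intervalIntegral.integral_interval_sub_left (intervalIntegrable_arcsinpIntegrand hp 0 y)
    (intervalIntegrable_arcsinpIntegrand hp 0 x)

lemma strictMonoOn_arcsinp (hp : 1 < p) : StrictMonoOn (arcsinp p) (Icc (-1) 1) := by
  intro x hx y hy hxy
  rw [← sub_pos, arcsinp_sub_arcsinp hp]
  refine intervalIntegral.intervalIntegral_pos_of_pos_on
    (intervalIntegrable_arcsinpIntegrand hp x y) (fun s hs => ?_) hxy
  exact arcsinpIntegrand_pos (by linarith) (abs_lt.2 ⟨hx.1.trans_lt hs.1, hs.2.trans_le hy.2⟩)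

lemma arcsinp_zero : arcsinp p 0 = 0 := intervalIntegral.integral_same

lemma arcsinp_one (hp : 1 < p) : arcsinp p 1 = pip p / 2 := by
  have h := arcsinp_sub_arcsinp hp (-1) 1
  rw [arcsinp_neg] at h
  change _ = pip p at h
  linarith

lemma pip_pos (hp : 1 < p) : 0 < pip p := by
  have := strictMonoOn_arcsinp hp (by norm_num) (by norm_num) zero_lt_one
  rw [arcsinp_zero, arcsinp_one hp] at this
  linarith

lemma arcsinp_mem_Ioo (hp : 1 < p) {σ : ℝ} (hσ : σ ∈ Ioo (-1) 1) :
    arcsinp p σ ∈ Ioo (-(pip p)/2) (pip p/2) := by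
  have h₁ := strictMonoOn_arcsinp hp (left_mem_Icc.2 (by norm_num)) (Ioo_subset_Icc_self hσ) hσ.1
  have h₂ := strictMonoOn_arcsinp hp (Ioo_subset_Icc_self hσ) (right_mem_Icc.2 (by norm_num)) hσ.2
  rw [arcsinp_neg, arcsinp_one hp] at h₁
  rw [arcsinp_one hp] at h₂
  exact ⟨by linarith, h₂⟩

lemma arcsinp_neg_mem_Ioo (hp : 1 < p) {σ : ℝ} (hσ : σ ∈ Ioo 0 1) :
    arcsinp p (-σ) ∈ Ioo (-(pip p)/2) 0 := by
  have h := strictMonoOn_arcsinp hp (by norm_num) ⟨by linarith [hσ.1], hσ.2.le⟩ hσ.1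
  rw [arcsinp_zero] at h
  exact ⟨(arcsinp_mem_Ioo hp ⟨by linarith [hσ.2], by linarith [hσ.1]⟩).1, by
    rw [arcsinp_neg]; linarith⟩

end arcsinp

section profile

variable {p : ℝ}

noncomputable def profile (p σ : ℝ) : ℝ := σ * (1 - |σ| ^ p) ^ ((p-1)/p)

noncomputable def profileArgmax (p : ℝ) : ℝ := p⁻¹ ^ p⁻¹

lemma profileArgmax_pos (hp : 0 < p) : 0 < profileArgmax p :=
  Real.rpow_pos_of_pos (inv_pos.2 hp) _

lemma profileArgmax_lt_one (hp : 1 < p) : profileArgmax p < 1 :=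
  Real.rpow_lt_one (by positivity) (inv_lt_one_of_one_lt₀ hp) (by positivity)

lemma profileArgmax_rpow (hp : 0 < p) : profileArgmax p ^ p = p⁻¹ := by
  rw [profileArgmax, ← Real.rpow_mul (by positivity), inv_mul_cancel₀ hp.ne', Real.rpow_one]

lemma profile_zero : profile p 0 = 0 := by simp [profile]

lemma profile_one (hp : 1 < p) : profile p 1 = 0 := by
  simp [profile, Real.zero_rpow (div_pos (sub_pos.2 hp) (by linarith)).ne']

lemma continuous_profile (hp : 1 ≤ p) : Continuous (profile p) :=
  continuous_id.mul ((continuous_const.sub (continuous_abs.rpow_const fun _ => Or.inr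
    (by linarith))).rpow_const fun _ => Or.inr (div_nonneg (by linarith) (by linarith)))

lemma pos_of_profile_pos (hp : 0 ≤ p) {σ : ℝ} (hσ : |σ| ≤ 1) (h : 0 < profile p σ) : 0 < σ := by
  by_contra! h0
  have hA : 0 ≤ 1 - |σ| ^ p := sub_nonneg.2 (Real.rpow_le_one (abs_nonneg σ) hσ hp)
  exact h.not_ge (mul_nonpos_of_nonpos_of_nonneg h0 (Real.rpow_nonneg hA _))

lemma hasDerivAt_profile (hp : 1 < p) {σ : ℝ} (hσ : σ ∈ Ioo 0 1) :
    HasDerivAt (profile p) ((1 - σ ^ p) ^ (-1/p) * (1 - p * σ ^ p)) σ := by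
  have hA : 0 < 1 - σ ^ p := sub_pos.2 (Real.rpow_lt_one hσ.1.le hσ.2 (by linarith))
  have hd := (hasDerivAt_id σ).mul
    (((Real.hasDerivAt_rpow_const (p := p) (Or.inl hσ.1.ne')).const_sub 1).rpow_const
      (p := (p-1)/p) (Or.inl hA.ne'))
  have heq : (fun s => id s * (1 - s ^ p) ^ ((p-1)/p)) =ᶠ[nhds σ] profile p :=
    eventually_of_mem (Ioi_mem_nhds hσ.1) fun s (hs : 0 < s) => by simp [profile, abs_of_pos hs]
  refine (hd.congr_of_eventuallyEq heq.symm).congr_deriv ?_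
  have hq : (p-1)/p = 1 + -1/p := by field_simp; ring
  have e₁ : (1 - σ ^ p) ^ ((p-1)/p) = (1 - σ ^ p) * (1 - σ ^ p) ^ (-1/p) := by
    rw [hq, Real.rpow_one_add' hA.le]
    rw [← hq]; exact (div_pos (by linarith) (by linarith)).ne'
  have e₂ : (1 - σ ^ p) ^ ((p-1)/p - 1) = (1 - σ ^ p) ^ (-1/p) := by rw [hq]; ring_nf
  have e₃ : σ * σ ^ (p-1) = σ ^ p := by
    rw [← Real.rpow_one_add' hσ.1.le (by linarith)]; ring_nf
  have e₄ : p * ((p-1)/p) = p - 1 := by field_simp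
  simp only [id, e₁, e₂]
  linear_combination (-(σ * σ ^ (p-1)) * (1 - σ ^ p) ^ (-1/p)) * e₄
    + (-(p-1) * (1 - σ ^ p) ^ (-1/p)) * e₃

lemma strictMonoOn_profile (hp : 1 < p) : StrictMonoOn (profile p) (Icc 0 (profileArgmax p)) := by
  refine strictMonoOn_of_deriv_pos (convex_Icc _ _) (continuous_profile hp.le).continuousOn
    fun σ hσ => ?_
  rw [interior_Icc] at hσ
  have h₁ : σ < 1 := hσ.2.trans (profileArgmax_lt_one hp)
  have hσp : σ ^ p < p⁻¹ :=
    profileArgmax_rpow (p := p) (by linarith) ▸ Real.rpow_lt_rpow hσ.1.le hσ.2 (by linarith)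
  have : p * σ ^ p < 1 := by
    simpa [mul_inv_cancel₀ (by linarith : p ≠ 0)] using
      mul_lt_mul_of_pos_left hσp (by linarith : 0 < p)
  rw [(hasDerivAt_profile hp ⟨hσ.1, h₁⟩).deriv]
  exact mul_pos (Real.rpow_pos_of_pos (sub_pos.2 (Real.rpow_lt_one hσ.1.le h₁ (by linarith))) _)
    (by linarith)

lemma strictAntiOn_profile (hp : 1 < p) : StrictAntiOn (profile p) (Icc (profileArgmax p) 1) := by
  refine strictAntiOn_of_deriv_neg (convex_Icc _ _) (continuous_profile hp.le).continuousOn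
    fun σ hσ => ?_
  rw [interior_Icc] at hσ
  have h₀ : 0 < σ := (profileArgmax_pos (by linarith)).trans hσ.1
  have hσp : p⁻¹ < σ ^ p :=
    profileArgmax_rpow (p := p) (by linarith) ▸
      Real.rpow_lt_rpow (profileArgmax_pos (by linarith)).le hσ.1 (by linarith)
  have : 1 < p * σ ^ p := by
    simpa [mul_inv_cancel₀ (by linarith : p ≠ 0)] using
      mul_lt_mul_of_pos_left hσp (by linarith : 0 < p)
  rw [(hasDerivAt_profile hp ⟨h₀, hσ.2⟩).deriv]
  exact mul_neg_of_pos_of_neg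
    (Real.rpow_pos_of_pos (sub_pos.2 (Real.rpow_lt_one h₀.le hσ.2 (by linarith))) _) (by linarith)

lemma profile_lt_profile_profileArgmax (hp : 1 < p) {σ : ℝ} (hσ : σ ∈ Icc 0 1)
    (hne : σ ≠ profileArgmax p) : profile p σ < profile p (profileArgmax p) := by
  have h₀ := profileArgmax_pos (p := p) (by linarith)
  have h₁ := profileArgmax_lt_one hp
  rcases hne.lt_or_gt with h | h
  · exact strictMonoOn_profile hp ⟨hσ.1, h.le⟩ ⟨h₀.le, le_rfl⟩ h
  · exact strictAntiOn_profile hp ⟨le_rfl, h₁.le⟩ ⟨h.le, hσ.2⟩ h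

lemma exists_setOf_profile_eq_pair (hp : 1 < p) {β : ℝ} (hβ₀ : 0 < β)
    (hβ : β < profile p (profileArgmax p)) :
    ∃ x y, x < y ∧ {σ | σ ∈ Ioo 0 1 ∧ profile p σ = β} = {x, y} :=
  exists_setOf_eq_pair_of_strictMonoOn_of_strictAntiOn (profileArgmax_pos (by linarith)).le
    (profileArgmax_lt_one hp).le (continuous_profile hp.le).continuousOn (strictMonoOn_profile hp)
    (strictAntiOn_profile hp) (by rwa [profile_zero]) (by rwa [profile_one hp]) hβ

lemma setOf_profile_eq_empty (hp : 1 < p) {β : ℝ} (hβ : profile p (profileArgmax p) < β) :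
    {σ | σ ∈ Ioo 0 1 ∧ profile p σ = β} = ∅ := by
  refine Set.eq_empty_of_forall_notMem fun σ ⟨hσ, hσβ⟩ => ?_
  rcases eq_or_ne σ (profileArgmax p) with rfl | hne
  · linarith
  · linarith [profile_lt_profile_profileArgmax hp (Ioo_subset_Icc_self hσ) hne]

lemma setOf_profile_eq_singleton (hp : 1 < p) :
    {σ | σ ∈ Ioo 0 1 ∧ profile p σ = profile p (profileArgmax p)} = {profileArgmax p} := by
  refine Set.eq_singleton_iff_unique_mem.2 ⟨⟨⟨profileArgmax_pos (by linarith),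
    profileArgmax_lt_one hp⟩, rfl⟩, fun σ ⟨hσ, hσβ⟩ => ?_⟩
  by_contra hne
  exact (profile_lt_profile_profileArgmax hp (Ioo_subset_Icc_self hσ) hne).ne hσβ

lemma isGreatest_profile (hp : 1 < p) :
    IsGreatest (profile p '' Ioo 0 1) (profile p (profileArgmax p)) := by
  refine ⟨⟨_, ⟨profileArgmax_pos (by linarith), profileArgmax_lt_one hp⟩, rfl⟩, ?_⟩
  rintro _ ⟨σ, hσ, rfl⟩
  rcases eq_or_ne σ (profileArgmax p) with rfl | hne
  · exact le_rfl
  · exact (profile_lt_profile_profileArgmax hp (Ioo_subset_Icc_self hσ) hne).le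

end profile

namespace IsPTrig

variable {p : ℝ} {sinp cosp : ℝ → ℝ}

lemma arcsinp_sinp (htrig : IsPTrig p sinp cosp) {t : ℝ}
    (ht : t ∈ Icc (-(pip p)/2) (pip p/2)) : arcsinp p (sinp t) = t :=
  (htrig.1 t ht).symm

lemma continuous_sinp (htrig : IsPTrig p sinp cosp) : Continuous sinp :=
  continuous_iff_continuousAt.2 fun t => (htrig.2.2.2 t).continuousAt

lemma arcsinpIntegrand_sinp_mul_cosp (htrig : IsPTrig p sinp cosp) (hp : 1 < p) {t : ℝ}
    (ht : t ∈ Icc (-(pip p)/2) (pip p/2)) (hs : 1 - |sinp t| ^ p ≠ 0) :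
    arcsinpIntegrand p (sinp t) * cosp t = 1 :=
  mul_eq_one_of_leftInvOn_Icc (by linarith [pip_pos hp]) ht (hasDerivAt_arcsinp hp hs)
    (htrig.2.2.2 t) fun _ hu => htrig.arcsinp_sinp hu

lemma cosp_pip_half (htrig : IsPTrig p sinp cosp) (hp : 1 < p) : cosp (pip p/2) = 0 :=
  (htrig.2.2.2 _).eq_zero_of_forall_add_eq_sub (pip_pos hp) fun x hx =>
    (htrig.2.1 _ ⟨by linarith [hx.1], by linarith [hx.2]⟩).trans (by congr 1; ring)

lemma cosp_neg_pip_half (htrig : IsPTrig p sinp cosp) (hp : 1 < p) : cosp (-(pip p)/2) = 0 :=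
  (htrig.2.2.2 _).eq_zero_of_forall_add_eq_sub (pip_pos hp) fun x hx => by
    rw [← htrig.2.2.1 (-(pip p)/2 - x),
      htrig.2.1 (-(pip p)/2 - x + 2 * pip p) ⟨by linarith [hx.2], by linarith [hx.1]⟩]
    congr 1; ring

lemma abs_sinp_eq_one_of_cosp_eq_zero (htrig : IsPTrig p sinp cosp) (hp : 1 < p) {t : ℝ}
    (ht : t ∈ Icc (-(pip p)/2) (pip p/2)) (hc : cosp t = 0) : |sinp t| = 1 := by
  by_contra h
  have hs : 1 - |sinp t| ^ p ≠ 0 := fun h0 => h <|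
    (Real.rpow_left_inj (z := p) (abs_nonneg _) zero_le_one (by linarith)).1
      (by rw [Real.one_rpow]; linarith)
  simpa [hc] using htrig.arcsinpIntegrand_sinp_mul_cosp hp ht hs

lemma sinp_pip_half (htrig : IsPTrig p sinp cosp) (hp : 1 < p) : sinp (pip p/2) = 1 := by
  have hP := pip_pos hp
  have hmem : pip p/2 ∈ Icc (-(pip p)/2) (pip p/2) := ⟨by linarith, le_rfl⟩
  rcases (abs_eq zero_le_one).1 (htrig.abs_sinp_eq_one_of_cosp_eq_zero hp hmem
    (htrig.cosp_pip_half hp)) with h | h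
  · exact h
  · have := htrig.arcsinp_sinp hmem
    rw [h, arcsinp_neg, arcsinp_one hp] at this
    linarith

lemma sinp_neg_pip_half (htrig : IsPTrig p sinp cosp) (hp : 1 < p) : sinp (-(pip p)/2) = -1 := by
  have hP := pip_pos hp
  have hmem : -(pip p)/2 ∈ Icc (-(pip p)/2) (pip p/2) := ⟨le_rfl, by linarith⟩
  rcases (abs_eq zero_le_one).1 (htrig.abs_sinp_eq_one_of_cosp_eq_zero hp hmem
    (htrig.cosp_neg_pip_half hp)) with h | h
  · have := htrig.arcsinp_sinp hmem
    rw [h, arcsinp_one hp] at this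
    linarith
  · exact h

lemma abs_sinp_lt_one (htrig : IsPTrig p sinp cosp) (hp : 1 < p) {t : ℝ}
    (ht : t ∈ Ioo (-(pip p)/2) (pip p/2)) : |sinp t| < 1 := by
  by_contra! h
  rcases le_abs'.1 h with hle | hge
  · obtain ⟨u, hu, hsu⟩ := intermediate_value_Icc ht.2.le htrig.continuous_sinp.continuousOn
      ⟨hle, by rw [htrig.sinp_pip_half hp]; norm_num⟩
    have := htrig.arcsinp_sinp ⟨by linarith [ht.1, hu.1], hu.2⟩
    rw [hsu, arcsinp_neg, arcsinp_one hp] at this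
    linarith [ht.1, hu.1]
  · obtain ⟨u, hu, hsu⟩ := intermediate_value_Icc ht.1.le htrig.continuous_sinp.continuousOn
      ⟨by rw [htrig.sinp_neg_pip_half hp]; norm_num, hge⟩
    have := htrig.arcsinp_sinp ⟨hu.1, by linarith [ht.2, hu.2]⟩
    rw [hsu, arcsinp_one hp] at this
    linarith [ht.2, hu.2]

lemma sinp_mem_Ioo (htrig : IsPTrig p sinp cosp) (hp : 1 < p) {t : ℝ}
    (ht : t ∈ Ioo (-(pip p)/2) (pip p/2)) : sinp t ∈ Ioo (-1) 1 :=
  abs_lt.1 (htrig.abs_sinp_lt_one hp ht)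

lemma sinp_arcsinp (htrig : IsPTrig p sinp cosp) (hp : 1 < p) {σ : ℝ} (hσ : σ ∈ Ioo (-1) 1) :
    sinp (arcsinp p σ) = σ := by
  have hmem := arcsinp_mem_Ioo hp hσ
  exact (strictMonoOn_arcsinp hp).injOn (Ioo_subset_Icc_self (htrig.sinp_mem_Ioo hp hmem))
    (Ioo_subset_Icc_self hσ) (htrig.arcsinp_sinp (Ioo_subset_Icc_self hmem))

lemma sinp_neg (htrig : IsPTrig p sinp cosp) (hp : 1 < p) {t : ℝ}
    (ht : t ∈ Ioo (-(pip p)/2) 0) : sinp t < 0 := by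
  have hmem : t ∈ Ioo (-(pip p)/2) (pip p/2) := ⟨ht.1, by linarith [pip_pos hp, ht.2]⟩
  rw [← (strictMonoOn_arcsinp hp).lt_iff_lt (Ioo_subset_Icc_self (htrig.sinp_mem_Ioo hp hmem))
    (by norm_num), htrig.arcsinp_sinp (Ioo_subset_Icc_self hmem), arcsinp_zero]
  exact ht.2

lemma cosp_eq (htrig : IsPTrig p sinp cosp) (hp : 1 < p) {t : ℝ}
    (ht : t ∈ Ioo (-(pip p)/2) (pip p/2)) : cosp t = (1 - |sinp t| ^ p) ^ (1/p) := by
  have hA : 0 < 1 - |sinp t| ^ p :=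
    sub_pos.2 (Real.rpow_lt_one (abs_nonneg _) (htrig.abs_sinp_lt_one hp ht) (by linarith))
  have h := htrig.arcsinpIntegrand_sinp_mul_cosp hp (Ioo_subset_Icc_self ht) hA.ne'
  rw [arcsinpIntegrand, neg_div, Real.rpow_neg hA.le, inv_mul_eq_one₀ (by positivity)] at h
  exact h.symm

lemma neg_spow_cosp_mul_sinp (htrig : IsPTrig p sinp cosp) (hp : 1 < p) {t : ℝ}
    (ht : t ∈ Ioo (-(pip p)/2) (pip p/2)) :
    -(spow (cosp t) (p-1) * sinp t) = profile p (-sinp t) := by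
  have hA : 0 < 1 - |sinp t| ^ p :=
    sub_pos.2 (Real.rpow_lt_one (abs_nonneg _) (htrig.abs_sinp_lt_one hp ht) (by linarith))
  have hc : 0 < (1 - |sinp t| ^ p) ^ (1/p) := Real.rpow_pos_of_pos hA _
  rw [spow, htrig.cosp_eq hp ht, Real.sign_of_pos hc, abs_of_pos hc, one_mul,
    ← Real.rpow_mul hA.le, profile, abs_neg, one_div_mul_eq_div]
  ring

lemma spow_cosp_eq_zero (htrig : IsPTrig p sinp cosp) (hp : 1 < p) {t : ℝ}
    (ht : t = -(pip p)/2 ∨ t = pip p/2) : spow (cosp t) (p-1) = 0 := by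
  rcases ht with rfl | rfl <;>
    simp [spow, htrig.cosp_neg_pip_half hp, htrig.cosp_pip_half hp]

lemma image_neg_spow_cosp_mul_sinp (htrig : IsPTrig p sinp cosp) (hp : 1 < p) :
    (fun ψ => -(spow (cosp ψ) (p-1) * sinp ψ)) '' Ioo (-(pip p)/2) 0 = profile p '' Ioo 0 1 := by
  have hsub : Ioo (-(pip p)/2) 0 ⊆ Ioo (-(pip p)/2) (pip p/2) :=
    Ioo_subset_Ioo_right (by linarith [pip_pos hp])
  ext y
  constructor
  · rintro ⟨ψ, hψ, rfl⟩
    exact ⟨-sinp ψ, ⟨neg_pos.2 (htrig.sinp_neg hp hψ), by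
      linarith [(htrig.sinp_mem_Ioo hp (hsub hψ)).1]⟩,
      (htrig.neg_spow_cosp_mul_sinp hp (hsub hψ)).symm⟩
  · rintro ⟨σ, hσ, rfl⟩
    have hψ := arcsinp_neg_mem_Ioo hp hσ
    refine ⟨_, hψ, ?_⟩
    dsimp only
    rw [htrig.neg_spow_cosp_mul_sinp hp (hsub hψ),
      htrig.sinp_arcsinp hp ⟨by linarith [hσ.2], by linarith [hσ.1]⟩, neg_neg]

lemma setOf_eq_image (htrig : IsPTrig p sinp cosp) (hp : 1 < p) {α c : ℝ} (hα : 0 < α)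
    (hc : 0 < c) :
    {ψ | ψ ∈ Icc (-(pip p)/2) (pip p/2) ∧ α + c * spow (cosp ψ) (p-1) * sinp ψ = 0} =
      (fun σ => arcsinp p (-σ)) '' {σ | σ ∈ Ioo 0 1 ∧ profile p σ = α / c} := by
  have hsub : Ioo (-(pip p)/2) 0 ⊆ Ioo (-(pip p)/2) (pip p/2) :=
    Ioo_subset_Ioo_right (by linarith [pip_pos hp])
  have hiff {ψ : ℝ} (hψ : ψ ∈ Ioo (-(pip p)/2) (pip p/2)) :
      α + c * spow (cosp ψ) (p-1) * sinp ψ = 0 ↔ profile p (-sinp ψ) = α / c := by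
    rw [← htrig.neg_spow_cosp_mul_sinp hp hψ, eq_div_iff hc.ne']
    constructor <;> intro h <;> linarith
  ext ψ
  constructor
  · rintro ⟨hψ, heq⟩
    rcases eq_endpoints_or_mem_Ioo_of_mem_Icc hψ with hend | hend | hψ'
    · simp [htrig.spow_cosp_eq_zero hp (Or.inl hend), hα.ne'] at heq
    · simp [htrig.spow_cosp_eq_zero hp (Or.inr hend), hα.ne'] at heq
    have hσ := (hiff hψ').1 heq
    have hs := htrig.sinp_mem_Ioo hp hψ'
    refine ⟨-sinp ψ, ⟨⟨pos_of_profile_pos (by linarith) (by rw [abs_neg]; exact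
      (htrig.abs_sinp_lt_one hp hψ').le) (hσ ▸ div_pos hα hc), by linarith [hs.1]⟩, hσ⟩, ?_⟩
    exact (congrArg (arcsinp p) (neg_neg _)).trans (htrig.arcsinp_sinp hψ)
  · rintro ⟨σ, ⟨hσ, hσβ⟩, rfl⟩
    have hψ := hsub (arcsinp_neg_mem_Ioo hp hσ)
    refine ⟨Ioo_subset_Icc_self hψ, (hiff hψ).2 ?_⟩
    rwa [htrig.sinp_arcsinp hp ⟨by linarith [hσ.2], by linarith [hσ.1]⟩, neg_neg]

end IsPTrig

/-- with `ℓ` the maximum of `-cos_p^{(p-1)}(ψ)·sin_p(ψ)` over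
`ψ ∈ (-π_p/2, 0)` and `ᾱ = (n-1)ℓ√(-k)/(p-1)`, the equation
`α + ((n-1)√(-k)/(p-1))·cos_p^{(p-1)}(ψ)·sin_p(ψ) = 0` has no solution in
`[-π_p/2, π_p/2]` if `α > ᾱ`, exactly two solutions `ψ₁ < ψ₂` in `(-π_p/2,0)`
if `0 < α < ᾱ`, and exactly one if `α = ᾱ`. -/
theorem stmt7 (p n k α : ℝ) (hp : 1 < p) (hn : 2 ≤ n) (hk : k < 0) (hα : 0 < α)
    (sinp cosp : ℝ → ℝ) (htrig : IsPTrig p sinp cosp)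
    (l alphabar : ℝ)
    (hl : IsGreatest ((fun ψ => -(spow (cosp ψ) (p-1) * sinp ψ)) ''
            Set.Ioo (-(pip p)/2) 0) l)
    (hab : alphabar = (n-1) * l * Real.sqrt (-k) / (p-1)) :
    (alphabar < α → ∀ ψ ∈ Set.Icc (-(pip p)/2) (pip p/2),
        α + (n-1) * Real.sqrt (-k) / (p-1) * spow (cosp ψ) (p-1) * sinp ψ ≠ 0) ∧
    (α < alphabar → ∃ ψ₁ ψ₂ : ℝ, ψ₁ ∈ Set.Ioo (-(pip p)/2) 0 ∧ ψ₂ ∈ Set.Ioo (-(pip p)/2) 0 ∧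
        ψ₁ < ψ₂ ∧
        {ψ : ℝ | ψ ∈ Set.Icc (-(pip p)/2) (pip p/2) ∧
          α + (n-1) * Real.sqrt (-k) / (p-1) * spow (cosp ψ) (p-1) * sinp ψ = 0}
          = {ψ₁, ψ₂}) ∧
    (α = alphabar → ∃! ψ : ℝ, ψ ∈ Set.Icc (-(pip p)/2) (pip p/2) ∧
        α + (n-1) * Real.sqrt (-k) / (p-1) * spow (cosp ψ) (p-1) * sinp ψ = 0) := by
  set c := (n-1) * Real.sqrt (-k) / (p-1)
  have hc : 0 < c := div_pos (mul_pos (by linarith) (Real.sqrt_pos.2 (neg_pos.2 hk))) (by linarith)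
  set M := profile p (profileArgmax p)
  have hlM : l = M := hl.unique (htrig.image_neg_spow_cosp_mul_sinp hp ▸ isGreatest_profile hp)
  have habar : alphabar = c * M := by rw [hab, hlM]; ring
  have hS := htrig.setOf_eq_image hp hα hc
  refine ⟨fun hlt ψ hψ heq => ?_, fun hlt => ?_, fun heq => ?_⟩
  · rw [setOf_profile_eq_empty hp (by rw [lt_div_iff₀ hc]; linarith), image_empty] at hS
    exact hS.subset ⟨hψ, heq⟩
  · obtain ⟨x, y, hxy, hL⟩ := exists_setOf_profile_eq_pair hp (div_pos hα hc)
      (by rw [div_lt_iff₀ hc]; linarith)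
    have hx : x ∈ {σ | σ ∈ Ioo 0 1 ∧ profile p σ = α / c} := hL ▸ mem_insert x {y}
    have hy : y ∈ {σ | σ ∈ Ioo 0 1 ∧ profile p σ = α / c} := hL ▸ mem_insert_of_mem x rfl
    refine ⟨_, _, arcsinp_neg_mem_Ioo hp hy.1, arcsinp_neg_mem_Ioo hp hx.1,
      strictMonoOn_arcsinp hp ⟨by linarith [hy.1.2], by linarith [hy.1.1]⟩
        ⟨by linarith [hx.1.2], by linarith [hx.1.1]⟩ (neg_lt_neg hxy), ?_⟩
    rw [hS, hL, image_pair, pair_comm]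
  · have hβ : α / c = M := by rw [heq, habar]; field_simp
    rw [hβ, setOf_profile_eq_singleton hp, image_singleton] at hS
    obtain ⟨hmem, huniq⟩ := Set.eq_singleton_iff_unique_mem.1 hS
    exact ⟨_, hmem, huniq⟩
end

section
/- Let u be a p-Laplacian eigenfunction on a compact n-manifold M with Ric ≥ (n-1)k, k < 0, min u = -1, satisfying the gradient bound |∇u(x)| ≤ w'(w^{-1}(u(x))) for a model function w with w(a) = -1, w'(a) = 0, w' > 0 on (a, b). Then for every ε > 0 small, the sublevel set u^{-1}([-1, -1+ε)) contains a geodesic ball of radius r_ε = w^{-1}(-1+ε) - a centered at any minimum point of u. -/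
/-!
Along a unit-speed minimizing geodesic `γ` from `x₀`, `f = u ∘ γ` satisfies `f(0) = w(a)` and
`f' ≤ w'(w⁻¹ f)`. The slightly faster model `t ↦ w(a + δ + (1 + δ) t)` starts above `f` and, at a
first contact, strictly outruns it because `w' > 0` on `(a, b)`; so it stays above `f`, and letting
`δ → 0` gives `u(γ t) ≤ w(a + t)`. Inside the ball of radius `w⁻¹(-1 + ε) - a` the right-hand side
is `< -1 + ε` by strict monotonicity of `w`.
-/

open Set Filter Topology

theorem nonpos_of_deriv_right_neg_of_eq_zero {g : ℝ → ℝ} {p q : ℝ}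
    (hg : ContinuousOn g (Icc p q)) (hp : g p < 0)
    (hzero : ∀ x ∈ Ioo p q, g x = 0 → ∃ d < 0, HasDerivWithinAt g d (Ici x) x) :
    ∀ ⦃x⦄, x ∈ Icc p q → g x ≤ 0 := by
  have hclosed : IsClosed ({x | g x ≤ 0} ∩ Icc p q) := by
    rw [inter_comm]; exact hg.preimage_isClosed_of_isClosed isClosed_Icc isClosed_Iic
  refine hclosed.Icc_subset_of_forall_mem_nhdsWithin hp.le ?_
  rintro x ⟨hgx : g x ≤ 0, hx⟩
  rcases hgx.lt_or_eq with hneg | hgx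
  · have hnear : ∀ᶠ y in 𝓝[Icc p q] x, g y < 0 := hg x (Ico_subset_Icc_self hx) (gt_mem_nhds hneg)
    have hright : ∀ᶠ y in 𝓝[>] x, g y < 0 := nhdsWithin_le_of_mem (Icc_mem_nhdsGT_of_mem hx) hnear
    exact hright.mono fun _ => le_of_lt
  · have hpx : p < x := hx.1.lt_of_ne (by rintro rfl; linarith)
    obtain ⟨d, hd, hderiv⟩ := hzero x ⟨hpx, hx.2⟩ hgx
    filter_upwards [hderiv.Ioi_of_Ici.limsup_slope_le' (lt_irrefl x) hd, self_mem_nhdsWithin]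
      with y hslope (hxy : x < y)
    rw [slope_def_field, hgx, sub_zero] at hslope
    exact (neg_of_div_neg_left hslope (sub_pos.2 hxy).le).le

section Model

variable {w w' winv f : ℝ → ℝ} {a b : ℝ}

theorem strictMonoOn_Icc_of_hasDerivAt_pos (hwd : ∀ s ∈ Icc a b, HasDerivAt w (w' s) s)
    (hw'pos : ∀ s ∈ Ioo a b, 0 < w' s) : StrictMonoOn w (Icc a b) := by
  refine strictMonoOn_of_deriv_pos (convex_Icc a b)
    (fun s hs => (hwd s hs).continuousAt.continuousWithinAt) fun s hs => ?_
  rw [interior_Icc] at hs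
  rw [(hwd s (Ioo_subset_Icc_self hs)).deriv]
  exact hw'pos s hs

theorem le_model_shift_of_deriv_le (hwd : ∀ s ∈ Icc a b, HasDerivAt w (w' s) s)
    (hw'pos : ∀ s ∈ Ioo a b, 0 < w' s) (hinv : ∀ s ∈ Icc a b, winv (w s) = s) {L δ : ℝ}
    (hf : ContinuousOn f (Icc 0 L)) (hf0 : f 0 = w a)
    (hf' : ∀ t ∈ Ioo 0 L, ∃ d, HasDerivAt f d t ∧ d ≤ w' (winv (f t)))
    (hδ : 0 < δ) (hδL : a + δ + (1 + δ) * L ≤ b) :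
    ∀ t ∈ Icc 0 L, f t ≤ w (a + δ + (1 + δ) * t) := by
  intro t ht
  have hL : 0 ≤ L := ht.1.trans ht.2
  have hmem : ∀ t ∈ Icc 0 L, a + δ + (1 + δ) * t ∈ Icc a b := fun t ht =>
    ⟨by nlinarith [ht.1], by nlinarith [ht.2]⟩
  have hmodel : ∀ t ∈ Icc 0 L,
      HasDerivAt (fun t => w (a + δ + (1 + δ) * t)) (w' (a + δ + (1 + δ) * t) * (1 + δ)) t :=
    fun t ht => (hwd _ (hmem t ht)).comp t
      (((hasDerivAt_id t).const_mul (1 + δ)).const_add _ |>.congr_deriv (mul_one _))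
  have hmono := strictMonoOn_Icc_of_hasDerivAt_pos hwd hw'pos
  suffices ∀ t ∈ Icc 0 L, f t - w (a + δ + (1 + δ) * t) ≤ 0 from sub_nonpos.1 (this t ht)
  refine nonpos_of_deriv_right_neg_of_eq_zero
    (hf.sub fun t ht => (hmodel t ht).continuousAt.continuousWithinAt) ?_ ?_
  · have hδmem : a + δ ∈ Icc a b := by simpa using hmem 0 ⟨le_rfl, hL⟩
    have : w a < w (a + δ) := hmono ⟨le_rfl, by linarith [hδmem.2]⟩ hδmem (by linarith)
    simpa [hf0] using this
  · intro s hs htouch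
    have hσ : a + δ + (1 + δ) * s ∈ Ioo a b := ⟨by nlinarith [hs.1], by nlinarith [hs.2]⟩
    obtain ⟨d, hd, hdle⟩ := hf' s hs
    rw [sub_eq_zero.1 htouch, hinv _ (Ioo_subset_Icc_self hσ)] at hdle
    refine ⟨d - w' (a + δ + (1 + δ) * s) * (1 + δ), ?_,
      (hd.sub (hmodel s (Ioo_subset_Icc_self hs))).hasDerivWithinAt⟩
    nlinarith [hw'pos _ hσ]

theorem le_model_of_deriv_le (hwd : ∀ s ∈ Icc a b, HasDerivAt w (w' s) s)
    (hw'pos : ∀ s ∈ Ioo a b, 0 < w' s) (hinv : ∀ s ∈ Icc a b, winv (w s) = s) {L : ℝ}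
    (hf : ContinuousOn f (Icc 0 L)) (hf0 : f 0 = w a)
    (hf' : ∀ t ∈ Ioo 0 L, ∃ d, HasDerivAt f d t ∧ d ≤ w' (winv (f t))) (hL : a + L < b) :
    ∀ t ∈ Icc 0 L, f t ≤ w (a + t) := by
  intro t ht
  have hwt : ContinuousAt w (a + t) := (hwd _ ⟨by linarith [ht.1], by linarith [ht.2]⟩).continuousAt
  have hlim : Tendsto (fun δ => w (a + δ + (1 + δ) * t)) (𝓝[>] 0) (𝓝 (w (a + t))) := by
    have : ContinuousAt (fun δ => w (a + δ + (1 + δ) * t)) 0 :=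
      ContinuousAt.comp (by simpa using hwt) (by fun_prop)
    simpa using this.tendsto.mono_left nhdsWithin_le_nhds
  have hsmall : ∀ᶠ δ in 𝓝[>] 0, a + δ + (1 + δ) * L ≤ b := by
    have : ContinuousAt (fun δ : ℝ => a + δ + (1 + δ) * L) 0 := by fun_prop
    exact nhdsWithin_le_nhds (this.eventually (eventually_le_nhds (by simpa using hL)))
  refine ge_of_tendsto hlim ?_
  filter_upwards [hsmall, self_mem_nhdsWithin] with δ hδL (hδ : 0 < δ)
  exact le_model_shift_of_deriv_le hwd hw'pos hinv hf hf0 hf' hδ hδL t ht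

end Model

theorem stmt17_general {M : Type*} [MetricSpace M]
    (u : M → ℝ) (hc : Continuous u)
    (x₀ : M) (hmin : u x₀ = -1)
    (a b : ℝ) (hab : a < b)
    (w w' winv : ℝ → ℝ)
    (hwa : w a = -1)
    (hwd : ∀ t ∈ Set.Icc a b, HasDerivAt w (w' t) t)
    (hw'pos : ∀ t ∈ Set.Ioo a b, 0 < w' t)
    (hinv : ∀ t ∈ Set.Icc a b, winv (w t) = t)
    -- existence of unit-speed minimizing geodesics
    (hgeo : ∀ x y : M, ∃ γ : ℝ → M, γ 0 = x ∧ γ (dist x y) = y ∧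
        ∀ s ∈ Set.Icc 0 (dist x y), ∀ t ∈ Set.Icc 0 (dist x y),
          dist (γ s) (γ t) = |s - t|)
    -- the gradient comparison along unit-speed minimizing geodesics
    (hgrad : ∀ (γ : ℝ → M) (L : ℝ),
        (∀ s ∈ Set.Icc 0 L, ∀ t ∈ Set.Icc 0 L, dist (γ s) (γ t) = |s - t|) →
        ∀ t ∈ Set.Ioo 0 L, ∃ d : ℝ,
          HasDerivAt (fun s => u (γ s)) d t ∧ |d| ≤ w' (winv (u (γ t)))) :
    ∃ ε₀ > 0, ∀ ε ∈ Set.Ioo 0 ε₀,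
      Metric.ball x₀ (winv (-1 + ε) - a) ⊆ {x | u x < -1 + ε} := by
  have hmono := strictMonoOn_Icc_of_hasDerivAt_pos hwd hw'pos
  have hwc : ContinuousOn w (Icc a b) := fun s hs => (hwd s hs).continuousAt.continuousWithinAt
  have hwb : -1 < w b := hwa ▸ hmono (left_mem_Icc.2 hab.le) (right_mem_Icc.2 hab.le) hab
  refine ⟨w b + 1, by linarith, fun ε hε x hx => ?_⟩
  obtain ⟨s, hs, hws⟩ : -1 + ε ∈ w '' Ioo a b :=
    intermediate_value_Ioo hab.le hwc ⟨by linarith [hε.1], by linarith [hε.2]⟩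
  rw [Metric.mem_ball, dist_comm, ← hws, hinv s (Ioo_subset_Icc_self hs)] at hx
  obtain ⟨γ, hγ0, hγx, hγ⟩ := hgeo x₀ x
  have hγc : ContinuousOn γ (Icc 0 (dist x₀ x)) :=
    (LipschitzOnWith.of_dist_le_mul (K := 1) fun s hs t ht => by
      simp [hγ s hs t ht, Real.dist_eq]).continuousOn
  have hcomp := le_model_of_deriv_le hwd hw'pos hinv (hc.comp_continuousOn hγc)
    (by simp [hγ0, hmin, hwa])
    (fun t ht => (hgrad γ _ hγ t ht).imp fun d hd => ⟨hd.1, (le_abs_self d).trans hd.2⟩)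
    (by linarith [hs.2]) (dist x₀ x) ⟨dist_nonneg, le_rfl⟩
  show u x < -1 + ε
  calc u x = u (γ (dist x₀ x)) := by rw [hγx]
    _ ≤ w (a + dist x₀ x) := hcomp
    _ < w s := hmono ⟨by linarith [dist_nonneg (x := x₀) (y := x)], by linarith [hs.2]⟩
        (Ioo_subset_Icc_self hs) (by linarith)
    _ = -1 + ε := hws

/-- let `u` be an eigenfunction on a compact manifold `M` with
`min u = -1` satisfying the gradient comparison `|∇u| ≤ w'∘w⁻¹∘u` for a model
`w` with `w(a) = -1`, `w'(a) = 0`, `w' > 0` on `(a,b)`.  Then for all small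
`ε > 0` the set `u⁻¹([-1,-1+ε))` contains the ball of radius
`r_ε = w⁻¹(-1+ε) - a` about any minimum point `x₀`.  The Riemannian structure
enters through the existence of unit-speed minimizing geodesics and through the
gradient bound along such geodesics. -/
theorem stmt17 {M : Type*} [MetricSpace M] [CompactSpace M]
    (u : M → ℝ) (hc : Continuous u)
    (x₀ : M) (hmin : u x₀ = -1) (hlb : ∀ x, -1 ≤ u x)
    (a b : ℝ) (hab : a < b)
    (w w' winv : ℝ → ℝ)
    (hwa : w a = -1)
    (hwd : ∀ t ∈ Set.Icc a b, HasDerivAt w (w' t) t)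
    (hw'a : w' a = 0)
    (hw'pos : ∀ t ∈ Set.Ioo a b, 0 < w' t)
    (hinv : ∀ t ∈ Set.Icc a b, winv (w t) = t)
    (hrange : ∀ x, u x ∈ Set.Icc (-1) (w b))
    -- existence of unit-speed minimizing geodesics
    (hgeo : ∀ x y : M, ∃ γ : ℝ → M, γ 0 = x ∧ γ (dist x y) = y ∧
        ∀ s ∈ Set.Icc 0 (dist x y), ∀ t ∈ Set.Icc 0 (dist x y),
          dist (γ s) (γ t) = |s - t|)
    -- the gradient comparison along unit-speed minimizing geodesics
    (hgrad : ∀ (γ : ℝ → M) (L : ℝ),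
        (∀ s ∈ Set.Icc 0 L, ∀ t ∈ Set.Icc 0 L, dist (γ s) (γ t) = |s - t|) →
        ∀ t ∈ Set.Ioo 0 L, ∃ d : ℝ,
          HasDerivAt (fun s => u (γ s)) d t ∧ |d| ≤ w' (winv (u (γ t)))) :
    ∃ ε₀ > 0, ∀ ε ∈ Set.Ioo 0 ε₀,
      Metric.ball x₀ (winv (-1 + ε) - a) ⊆ {x | u x < -1 + ε} :=
  stmt17_general u hc x₀ hmin a b hab w w' winv hwa hwd hw'pos hinv hgeo hgrad
end

section
/- Let u : M → ℝ be a p-Laplacian eigenfunction on a compact n-manifold with min u = -1 and max u = u* > 0, satisfying the gradient comparison |∇u| ≤ w'∘w^{-1}∘u for a model w : [a,b] → [-1, u*] with w(a) = -1, w(b) = u*, w' > 0 on (a,b). Then the diameter d of M satisfies d ≥ b - a. -/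
/-! Along a unit-speed minimizing geodesic `γ` from a minimum point to a maximum point of `u`,
pick a subinterval `[t₁, t₂]` on which `f = u ∘ γ` runs from `-1` to `u*` while staying strictly
in between. There the gradient comparison and the inverse function rule give
`(w⁻¹ ∘ f)' = f' / w'(w⁻¹ ∘ f) ≤ 1`, so by the mean value theorem `w⁻¹ ∘ f`, which goes from `a`
to `b`, needs time `t₂ - t₁ ≥ b - a`; and `t₂ - t₁` is at most the length of `γ`, hence at most
the diameter. -/

open Set

theorem continuousOn_leftInverse_of_monotoneOn {w winv : ℝ → ℝ} {a b : ℝ} (hab : a ≤ b)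
    (hwc : ContinuousOn w (Icc a b)) (hmono : MonotoneOn w (Icc a b))
    (hinv : ∀ t ∈ Icc a b, winv (w t) = t) :
    ContinuousOn winv (Icc (w a) (w b)) := by
  have himage : w '' Icc a b = Icc (w a) (w b) := hwc.image_Icc_of_monotoneOn hab hmono
  have hmaps : MapsTo winv (Icc (w a) (w b)) (Icc a b) := by
    rw [← himage]
    rintro _ ⟨t, ht, rfl⟩
    rwa [hinv t ht]
  let F : Icc (w a) (w b) → Icc a b := hmaps.restrict
  have hF_mono : Monotone F := by
    rintro ⟨y, hy⟩ ⟨y', hy'⟩ hyy'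
    rw [← himage] at hy hy'
    obtain ⟨s, hs, rfl⟩ := hy
    obtain ⟨s', hs', rfl⟩ := hy'
    change winv (w s) ≤ winv (w s')
    rw [hinv s hs, hinv s' hs']
    by_contra! hlt
    have heq : w s = w s' := le_antisymm hyy' (hmono hs' hs hlt.le)
    have hss' := congrArg winv heq
    rw [hinv s hs, hinv s' hs'] at hss'
    exact hlt.ne' hss'
  have hF_surj : Function.Surjective F := fun ⟨t, ht⟩ =>
    ⟨⟨w t, himage ▸ mem_image_of_mem w ht⟩, Subtype.ext (hinv t ht)⟩
  rw [continuousOn_iff_continuous_domRestrict]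
  exact continuous_subtype_val.comp (hF_mono.continuous_of_surjective hF_surj)

theorem hasDerivAt_leftInverse_of_strictMonoOn {w winv : ℝ → ℝ} {a b τ w'τ : ℝ}
    (hwc : ContinuousOn w (Icc a b)) (hmono : StrictMonoOn w (Icc a b))
    (hinv : ∀ t ∈ Icc a b, winv (w t) = t) (hτ : τ ∈ Ioo a b)
    (hw : HasDerivAt w w'τ τ) (hne : w'τ ≠ 0) :
    HasDerivAt winv w'τ⁻¹ (w τ) := by
  have hab : a ≤ b := (hτ.1.trans hτ.2).le
  have hτ' : τ ∈ Icc a b := Ioo_subset_Icc_self hτ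
  have hnhds : Icc (w a) (w b) ∈ nhds (w τ) :=
    Icc_mem_nhds (hmono (left_mem_Icc.2 hab) hτ' hτ.1) (hmono hτ' (right_mem_Icc.2 hab) hτ.2)
  refine HasDerivAt.of_local_left_inverse
    ((continuousOn_leftInverse_of_monotoneOn hab hwc hmono.monotoneOn hinv).continuousAt hnhds)
    (by rwa [hinv τ hτ']) hne ?_
  filter_upwards [hnhds] with y hy
  rw [← hwc.image_Icc_of_monotoneOn hab hmono.monotoneOn] at hy
  obtain ⟨s, hs, rfl⟩ := hy
  rw [hinv s hs]

theorem exists_crossing_Icc {f : ℝ → ℝ} {p q α β : ℝ} (hpq : p ≤ q)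
    (hf : ContinuousOn f (Icc p q)) (hp : f p = α) (hq : f q = β) :
    ∃ t₁ t₂, p ≤ t₁ ∧ t₁ ≤ t₂ ∧ t₂ ≤ q ∧ f t₁ = α ∧ f t₂ = β ∧
      ∀ t ∈ Ioo t₁ t₂, f t ≠ α ∧ f t ≠ β := by
  have hlevel_compact : ∀ r ≤ q, ∀ c, IsCompact (Icc p r ∩ f ⁻¹' {c}) := fun r hr c =>
    isCompact_Icc.of_isClosed_subset
      ((hf.mono (Icc_subset_Icc_right hr)).preimage_isClosed_of_isClosed isClosed_Icc
        isClosed_singleton) inter_subset_left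
  obtain ⟨t₂, ⟨⟨hpt₂, ht₂q⟩, hft₂⟩, ht₂_least⟩ :=
    (hlevel_compact q le_rfl β).exists_isLeast ⟨q, right_mem_Icc.2 hpq, hq⟩
  obtain ⟨t₁, ⟨⟨hpt₁, ht₁₂⟩, hft₁⟩, ht₁_greatest⟩ :=
    (hlevel_compact t₂ ht₂q α).exists_isGreatest ⟨p, left_mem_Icc.2 hpt₂, hp⟩
  refine ⟨t₁, t₂, hpt₁, ht₁₂, ht₂q, hft₁, hft₂, fun t ht => ⟨fun hα => ?_, fun hβ => ?_⟩⟩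
  · exact ht.1.not_ge (ht₁_greatest ⟨⟨hpt₁.trans ht.1.le, ht.2.le⟩, hα⟩)
  · exact ht.2.not_ge (ht₂_least ⟨⟨hpt₁.trans ht.1.le, ht.2.le.trans ht₂q⟩, hβ⟩)

theorem sub_le_sub_of_deriv_le_model_speed {f w w' winv : ℝ → ℝ} {a b t₁ t₂ : ℝ} (hab : a ≤ b)
    (ht : t₁ ≤ t₂) (hwd : ∀ t ∈ Icc a b, HasDerivAt w (w' t) t)
    (hw'pos : ∀ t ∈ Ioo a b, 0 < w' t) (hinv : ∀ t ∈ Icc a b, winv (w t) = t)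
    (hf : ContinuousOn f (Icc t₁ t₂)) (hf₁ : f t₁ = w a) (hf₂ : f t₂ = w b)
    (hf_mem : MapsTo f (Ioo t₁ t₂) (Ioo (w a) (w b)))
    (hf' : ∀ t ∈ Ioo t₁ t₂, ∃ d, HasDerivAt f d t ∧ d ≤ w' (winv (f t))) :
    b - a ≤ t₂ - t₁ := by
  have hwc : ContinuousOn w (Icc a b) := fun t ht => (hwd t ht).continuousAt.continuousWithinAt
  have hmono : StrictMonoOn w (Icc a b) := strictMonoOn_of_deriv_pos (convex_Icc a b) hwc
    fun t ht => by
      rw [interior_Icc] at ht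
      rw [(hwd t (Ioo_subset_Icc_self ht)).deriv]
      exact hw'pos t ht
  have hg_cont : ContinuousOn (winv ∘ f) (Icc t₁ t₂) := by
    refine (continuousOn_leftInverse_of_monotoneOn hab hwc hmono.monotoneOn hinv).comp hf
      fun t ht => ?_
    have hwab : w a ≤ w b := hmono.monotoneOn (left_mem_Icc.2 hab) (right_mem_Icc.2 hab) hab
    rcases eq_endpoints_or_mem_Ioo_of_mem_Icc ht with rfl | rfl | ht'
    · rw [hf₁]; exact left_mem_Icc.2 hwab
    · rw [hf₂]; exact right_mem_Icc.2 hwab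
    · exact Ioo_subset_Icc_self (hf_mem ht')
  have hg_deriv : ∀ t ∈ Ioo t₁ t₂, ∃ d, HasDerivAt (winv ∘ f) d t ∧ d ≤ 1 := by
    intro t ht
    obtain ⟨τ, hτ, hwτ⟩ := intermediate_value_Ioo hab hwc (hf_mem ht)
    obtain ⟨d, hd, hd_le⟩ := hf' t ht
    rw [← hwτ, hinv τ (Ioo_subset_Icc_self hτ)] at hd_le
    have hpos := hw'pos τ hτ
    have hwinv := hasDerivAt_leftInverse_of_strictMonoOn hwc hmono hinv hτ
      (hwd τ (Ioo_subset_Icc_self hτ)) hpos.ne'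
    rw [hwτ] at hwinv
    refine ⟨(w' τ)⁻¹ * d, hwinv.comp t hd, ?_⟩
    rwa [inv_mul_le_iff₀ hpos, mul_one]
  have hmvt := (convex_Icc t₁ t₂).image_sub_le_mul_sub_of_deriv_le hg_cont
    (fun t ht => by
      rw [interior_Icc] at ht
      obtain ⟨d, hd, -⟩ := hg_deriv t ht
      exact hd.differentiableAt.differentiableWithinAt)
    (fun t ht => by
      rw [interior_Icc] at ht
      obtain ⟨d, hd, hd_le⟩ := hg_deriv t ht
      rwa [hd.deriv])
    t₁ (left_mem_Icc.2 ht) t₂ (right_mem_Icc.2 ht) ht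
  simpa [hf₁, hf₂, hinv a (left_mem_Icc.2 hab), hinv b (right_mem_Icc.2 hab)] using hmvt

theorem stmt18_general {M : Type*} [MetricSpace M] [CompactSpace M]
    (u : M → ℝ) (hc : Continuous u)
    (ustar : ℝ)
    (x₀ y₀ : M) (hmin : u x₀ = -1) (hmax : u y₀ = ustar)
    (a b : ℝ) (hab : a < b)
    (w w' winv : ℝ → ℝ)
    (hwa : w a = -1) (hwb : w b = ustar)
    (hwd : ∀ t ∈ Set.Icc a b, HasDerivAt w (w' t) t)
    (hw'pos : ∀ t ∈ Set.Ioo a b, 0 < w' t)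
    (hinv : ∀ t ∈ Set.Icc a b, winv (w t) = t)
    (hrange : ∀ x, u x ∈ Set.Icc (-1) ustar)
    (hgeo : ∀ x y : M, ∃ γ : ℝ → M, γ 0 = x ∧ γ (dist x y) = y ∧
        ∀ s ∈ Set.Icc 0 (dist x y), ∀ t ∈ Set.Icc 0 (dist x y),
          dist (γ s) (γ t) = |s - t|)
    (hgrad : ∀ (γ : ℝ → M) (L : ℝ),
        (∀ s ∈ Set.Icc 0 L, ∀ t ∈ Set.Icc 0 L, dist (γ s) (γ t) = |s - t|) →
        ∀ t ∈ Set.Ioo 0 L, ∃ d : ℝ,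
          HasDerivAt (fun s => u (γ s)) d t ∧ |d| ≤ w' (winv (u (γ t)))) :
    b - a ≤ Metric.diam (Set.univ : Set M) := by
  obtain ⟨γ, hγ₀, hγL, hγ⟩ := hgeo x₀ y₀
  have hγ_cont : ContinuousOn γ (Icc 0 (dist x₀ y₀)) :=
    (LipschitzOnWith.of_dist_le_mul (K := 1) fun s hs t ht => by
      simp [hγ s hs t ht, Real.dist_eq]).continuousOn
  obtain ⟨t₁, t₂, h₀₁, h₁₂, h₂L, hf₁, hf₂, hcross⟩ :=
    exists_crossing_Icc (α := w a) (β := w b) dist_nonneg (hc.comp_continuousOn hγ_cont)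
      (by simp [hγ₀, hmin, hwa]) (by simp [hγL, hmax, hwb])
  have hsub : Ioo t₁ t₂ ⊆ Ioo 0 (dist x₀ y₀) := Ioo_subset_Ioo h₀₁ h₂L
  have hmodel := sub_le_sub_of_deriv_le_model_speed hab.le h₁₂ hwd hw'pos hinv
    (hc.comp_continuousOn (hγ_cont.mono (Icc_subset_Icc h₀₁ h₂L))) hf₁ hf₂
    (fun t ht => by
      obtain ⟨hne_a, hne_b⟩ := hcross t ht
      have hmem := hrange (γ t)
      rw [← hwa, ← hwb] at hmem
      obtain ⟨hlo, hhi⟩ := hmem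
      exact ⟨lt_of_le_of_ne hlo (Ne.symm hne_a), lt_of_le_of_ne hhi hne_b⟩)
    (fun t ht => by
      obtain ⟨d, hd, hd_le⟩ := hgrad γ _ hγ t (hsub ht)
      exact ⟨d, hd, (le_abs_self d).trans hd_le⟩)
  calc b - a ≤ t₂ - t₁ := hmodel
    _ ≤ dist x₀ y₀ := by linarith
    _ ≤ Metric.diam (univ : Set M) :=
      Metric.dist_le_diam_of_mem isCompact_univ.isBounded (mem_univ x₀) (mem_univ y₀)

/-- let `u` be an eigenfunction on a compact manifold `M` with
`min u = -1`, `max u = u* > 0`, satisfying the gradient comparison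
`|∇u| ≤ w'∘w⁻¹∘u` for a model `w : [a,b] → [-1,u*]` with `w(a) = -1`,
`w(b) = u*`, `w' > 0` on `(a,b)`.  Then the diameter of `M` satisfies
`d ≥ b - a`.  The Riemannian structure enters through the existence of
unit-speed minimizing geodesics and the gradient bound along them. -/
theorem stmt18 {M : Type*} [MetricSpace M] [CompactSpace M]
    (u : M → ℝ) (hc : Continuous u)
    (ustar : ℝ) (hustar : 0 < ustar)
    (x₀ y₀ : M) (hmin : u x₀ = -1) (hmax : u y₀ = ustar)
    (hlb : ∀ x, -1 ≤ u x) (hub : ∀ x, u x ≤ ustar)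
    (a b : ℝ) (hab : a < b)
    (w w' winv : ℝ → ℝ)
    (hwa : w a = -1) (hwb : w b = ustar)
    (hwd : ∀ t ∈ Set.Icc a b, HasDerivAt w (w' t) t)
    (hw'pos : ∀ t ∈ Set.Ioo a b, 0 < w' t)
    (hinv : ∀ t ∈ Set.Icc a b, winv (w t) = t)
    (hrange : ∀ x, u x ∈ Set.Icc (-1) ustar)
    (hgeo : ∀ x y : M, ∃ γ : ℝ → M, γ 0 = x ∧ γ (dist x y) = y ∧
        ∀ s ∈ Set.Icc 0 (dist x y), ∀ t ∈ Set.Icc 0 (dist x y),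
          dist (γ s) (γ t) = |s - t|)
    (hgrad : ∀ (γ : ℝ → M) (L : ℝ),
        (∀ s ∈ Set.Icc 0 L, ∀ t ∈ Set.Icc 0 L, dist (γ s) (γ t) = |s - t|) →
        ∀ t ∈ Set.Ioo 0 L, ∃ d : ℝ,
          HasDerivAt (fun s => u (γ s)) d t ∧ |d| ≤ w' (winv (u (γ t)))) :
    b - a ≤ Metric.diam (Set.univ : Set M) :=
  stmt18_general u hc ustar x₀ y₀ hmin hmax a b hab w w' winv hwa hwb hwd hw'pos hinv hrange hgeo
    hgrad
end
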